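/- For the stretched exponential kernel μ(t) = (1/2)e^{-√t}, the asphericity A₂ = 1 - 4·(21/204) = 10/17, where lim_{τ→∞} α(τ) = 21 and lim_{τ→∞} β(τ) = 204. -/

import Mathlib

/-!
Substituting `τ = x²` turns the kernel into `e^{-x}/2`, and then `M(x²) = 1 - (1 + x) e^{-x}`.
Every integral occurring in `α` and `β` has an explicit antiderivative in `x` of the form
`R(x) + P(x) e^{-x} + Q(x) e^{-2x}` with polynomials `R, P, Q`, and so do `α(x²)` and `β(x²)`
themselves, with constant `R = 21` and `R = 204` respectively. The exponential terms vanish as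
`x → ∞`, which gives the limits, and `A₂ = 1 - 4 · 21/204 = 10/17` follows.
-/

open Filter intervalIntegral

/-- Cumulative of the memory kernel: `M(t) = ∫_0^t μ(s) ds`. -/
noncomputable def cumul (μ : ℝ → ℝ) (t : ℝ) : ℝ := ∫ s in (0:ℝ)..t, μ s

/-- The function `α(τ)` from the Asphericity Theorem. -/
noncomputable def alphaFn (μ : ℝ → ℝ) (τ : ℝ) : ℝ :=
  (1/2) * ((∫ s in (0:ℝ)..τ, s * μ s) ^ 2 + (∫ s in (0:ℝ)..τ, cumul μ s) ^ 2
      - τ ^ 2 * (cumul μ τ) ^ 2)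
  + ∫ s in (0:ℝ)..τ, ((4 * s - τ) * cumul μ τ - 2 * s * cumul μ s) * cumul μ s

/-- The function `β(τ)` from the Asphericity Theorem. -/
noncomputable def betaFn (μ : ℝ → ℝ) (τ : ℝ) : ℝ :=
  2 * ((∫ s in (0:ℝ)..τ, s * μ s) ^ 2 + (∫ s in (0:ℝ)..τ, cumul μ s) ^ 2
      + 3 * τ ^ 2 * (cumul μ τ) ^ 2)
  - 4 * ∫ s in (0:ℝ)..τ, ((4 * s + τ) * cumul μ τ - 2 * s * cumul μ s) * cumul μ s

open Polynomial Real

noncomputable def expPoly (R P Q : ℝ[X]) (y : ℝ) : ℝ :=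
  R.eval y + P.eval y * exp (-y) + Q.eval y * exp (-y) ^ 2

theorem hasDerivAt_expPoly (R P Q : ℝ[X]) (y : ℝ) :
    HasDerivAt (expPoly R P Q)
      (expPoly (derivative R) (derivative P - P) (derivative Q - 2 * Q) y) y := by
  have hE := (hasDerivAt_neg y).exp
  refine (((R.hasDerivAt y).add ((P.hasDerivAt y).mul hE)).add
    ((Q.hasDerivAt y).mul (hE.pow 2))).congr_deriv ?_
  simp only [expPoly, eval_sub, eval_mul, eval_ofNat, Pi.pow_apply]
  ring

theorem continuous_expPoly (R P Q : ℝ[X]) : Continuous (expPoly R P Q) :=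
  continuous_iff_continuousAt.2 fun y => (hasDerivAt_expPoly R P Q y).continuousAt

theorem Polynomial.tendsto_eval_mul_exp_neg_atTop (P : ℝ[X]) :
    Tendsto (fun y => P.eval y * exp (-y)) atTop (nhds 0) :=
  (P.tendsto_div_exp_atTop).congr fun y => by rw [exp_neg, div_eq_mul_inv]

theorem tendsto_expPoly_atTop (c : ℝ) (P Q : ℝ[X]) :
    Tendsto (expPoly (C c) P Q) atTop (nhds c) := by
  have hQ := Q.tendsto_eval_mul_exp_neg_atTop.mul (tendsto_eval_mul_exp_neg_atTop 1)
  have h := (tendsto_const_nhds (x := c)).add (P.tendsto_eval_mul_exp_neg_atTop.add hQ)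
  rw [mul_zero, add_zero, add_zero] at h
  refine h.congr fun y => ?_
  simp only [expPoly, eval_C, eval_one]
  ring

theorem tendsto_of_sq_eq_expPoly {f : ℝ → ℝ} {c : ℝ} {P Q : ℝ[X]}
    (h : ∀ x, 0 ≤ x → f (x ^ 2) = expPoly (C c) P Q x) : Tendsto f atTop (nhds c) := by
  refine ((tendsto_expPoly_atTop c P Q).comp tendsto_sqrt_atTop).congr' ?_
  filter_upwards [eventually_ge_atTop 0] with τ hτ
  rw [Function.comp_apply, ← h _ (sqrt_nonneg τ), sq_sqrt hτ]

theorem integral_sq_eq_sub_of_hasDerivAt {F g : ℝ → ℝ} {x : ℝ} (hx : 0 ≤ x)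
    (hFc : Continuous F) (hF : ∀ y, 0 < y → HasDerivAt F (2 * y * g (y ^ 2)) y)
    (hg : Continuous g) : ∫ s in (0:ℝ)..x ^ 2, g s = F x - F 0 := by
  have hderiv : ∀ t ∈ Set.Ioo 0 (x ^ 2), HasDerivAt (F ∘ sqrt) (g t) t := fun t ht => by
    have hroot := sqrt_pos.2 ht.1
    refine ((hF _ hroot).comp t (hasDerivAt_sqrt ht.1.ne')).congr_deriv ?_
    rw [sq_sqrt ht.1.le]
    field_simp
  rw [integral_eq_sub_of_hasDerivAt_of_le (sq_nonneg x)
    (hFc.comp continuous_sqrt).continuousOn hderiv (hg.intervalIntegrable _ _)]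
  simp [sqrt_sq hx]

theorem integral_sq_eq_expPoly {g : ℝ → ℝ} {R P Q : ℝ[X]} {x : ℝ} (hx : 0 ≤ x)
    (hF : ∀ y, 0 < y →
      expPoly (derivative R) (derivative P - P) (derivative Q - 2 * Q) y = 2 * y * g (y ^ 2))
    (hF0 : expPoly R P Q 0 = 0) (hg : Continuous g) :
    ∫ s in (0:ℝ)..x ^ 2, g s = expPoly R P Q x := by
  rw [integral_sq_eq_sub_of_hasDerivAt hx (continuous_expPoly R P Q)
    (fun y hy => (hasDerivAt_expPoly R P Q y).congr_deriv (hF y hy)) hg, hF0, sub_zero]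

theorem continuous_cumul {μ : ℝ → ℝ} (hμ : Continuous μ) : Continuous (cumul μ) :=
  continuous_primitive (fun _ _ => hμ.intervalIntegrable _ _) 0

theorem integral_affine_mul_sub_mul_mul {M : ℝ → ℝ} (hM : Continuous M) (τ m c : ℝ) :
    ∫ s in (0:ℝ)..τ, ((4 * s + c) * m - 2 * s * M s) * M s
      = 4 * m * (∫ s in (0:ℝ)..τ, s * M s) + c * m * (∫ s in (0:ℝ)..τ, M s)
        - 2 * ∫ s in (0:ℝ)..τ, s * M s ^ 2 := by
  have hint {f : ℝ → ℝ} (hf : Continuous f) :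
      IntervalIntegrable f MeasureTheory.volume 0 τ :=
    hf.intervalIntegrable _ _
  calc _ = ∫ s in (0:ℝ)..τ, (4 * m * (s * M s) + c * m * M s - 2 * (s * M s ^ 2)) :=
        integral_congr fun s _ => by ring
    _ = _ := by
      rw [integral_sub (hint (by fun_prop)) (hint (by fun_prop)),
        integral_add (hint (by fun_prop)) (hint (by fun_prop)),
        integral_const_mul, integral_const_mul, integral_const_mul]

namespace StretchedExp

noncomputable def kernel (t : ℝ) : ℝ := 1 / 2 * exp (-√t)

theorem continuous_kernel : Continuous kernel := by
  unfold kernel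
  fun_prop

variable {x : ℝ}

theorem cumul_kernel_sq (hx : 0 ≤ x) : cumul kernel (x ^ 2) = expPoly 1 (-(X + 1)) 0 x := by
  refine integral_sq_eq_expPoly hx (fun y hy => ?_) (by norm_num [expPoly]) continuous_kernel
  simp only [expPoly, derivative_add, derivative_neg, derivative_X, derivative_one,
    derivative_zero, eval_add, eval_sub, eval_neg, eval_mul, eval_X, eval_ofNat, eval_one,
    eval_zero]
  rw [kernel, sqrt_sq hy.le]
  ring

theorem integral_mul_kernel_sq (hx : 0 ≤ x) :
    ∫ s in (0:ℝ)..x ^ 2, s * kernel s = expPoly 6 (-(X ^ 3 + 3 * X ^ 2 + 6 * X + 6)) 0 x := by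
  refine integral_sq_eq_expPoly hx (fun y hy => ?_) (by norm_num [expPoly])
    (continuous_id.mul continuous_kernel)
  simp only [expPoly, derivative_add, derivative_neg, derivative_mul, derivative_X_pow,
    derivative_X, derivative_ofNat, derivative_zero, eval_add, eval_sub, eval_neg, eval_mul,
    eval_pow, eval_C, eval_X, eval_ofNat, eval_one, eval_zero]
  rw [kernel, sqrt_sq hy.le]
  ring

theorem integral_cumul_sq (hx : 0 ≤ x) :
    ∫ s in (0:ℝ)..x ^ 2, cumul kernel s = expPoly (X ^ 2 - 6) (2 * X ^ 2 + 6 * X + 6) 0 x := by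
  refine integral_sq_eq_expPoly hx (fun y hy => ?_) (by norm_num [expPoly])
    (continuous_cumul continuous_kernel)
  rw [cumul_kernel_sq hy.le]
  simp only [expPoly, derivative_add, derivative_sub, derivative_mul, derivative_X_pow,
    derivative_X, derivative_ofNat, derivative_zero, eval_add, eval_sub, eval_neg, eval_mul,
    eval_pow, eval_C, eval_X, eval_ofNat, eval_one, eval_zero]
  ring

theorem integral_mul_cumul_sq (hx : 0 ≤ x) :
    ∫ s in (0:ℝ)..x ^ 2, s * cumul kernel s
      = expPoly (C (1 / 2) * X ^ 4 - 60)
          (2 * X ^ 4 + 10 * X ^ 3 + 30 * X ^ 2 + 60 * X + 60) 0 x := by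
  refine integral_sq_eq_expPoly hx (fun y hy => ?_) (by norm_num [expPoly])
    (continuous_id.mul (continuous_cumul continuous_kernel))
  rw [cumul_kernel_sq hy.le]
  simp only [expPoly, derivative_add, derivative_sub, derivative_mul, derivative_X_pow,
    derivative_X, derivative_C, derivative_ofNat, derivative_zero, eval_add, eval_sub, eval_neg,
    eval_mul, eval_pow, eval_C, eval_X, eval_ofNat, eval_one, eval_zero]
  ring

theorem integral_mul_cumul_sq_sq (hx : 0 ≤ x) :
    ∫ s in (0:ℝ)..x ^ 2, s * cumul kernel s ^ 2
      = expPoly (C (1 / 2) * X ^ 4 - C (225 / 2))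
          (4 * X ^ 4 + 20 * X ^ 3 + 60 * X ^ 2 + 120 * X + 120)
          (-(X ^ 5 + C (9 / 2) * X ^ 4 + 10 * X ^ 3 + 15 * X ^ 2 + 15 * X + C (15 / 2))) x := by
  refine integral_sq_eq_expPoly hx (fun y hy => ?_) (by norm_num [expPoly])
    (continuous_id.mul ((continuous_cumul continuous_kernel).pow 2))
  rw [cumul_kernel_sq hy.le]
  simp only [expPoly, derivative_add, derivative_sub, derivative_neg, derivative_mul,
    derivative_X_pow, derivative_X, derivative_C, derivative_ofNat, eval_add, eval_sub,
    eval_neg, eval_mul, eval_pow, eval_C, eval_X, eval_ofNat, eval_one, eval_zero]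
  ring

theorem alphaFn_kernel_sq (hx : 0 ≤ x) :
    alphaFn kernel (x ^ 2)
      = expPoly (C 21) (168 + 168 * X - 36 * X ^ 2 - 12 * X ^ 3)
          (-(2 * X ^ 5 + 19 * X ^ 4 + 92 * X ^ 3 + 258 * X ^ 2 + 378 * X + 189)) x := by
  simp only [alphaFn, sub_eq_add_neg (4 * (_ : ℝ))]
  rw [integral_affine_mul_sub_mul_mul (continuous_cumul continuous_kernel),
    integral_mul_kernel_sq hx, integral_cumul_sq hx, integral_mul_cumul_sq hx,
    integral_mul_cumul_sq_sq hx, cumul_kernel_sq hx]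
  simp only [expPoly, eval_add, eval_sub, eval_neg, eval_mul, eval_pow, eval_C, eval_X,
    eval_ofNat, eval_one, eval_zero]
  ring

theorem betaFn_kernel_sq (hx : 0 ≤ x) :
    betaFn kernel (x ^ 2)
      = expPoly (C 204) (-(48 * X ^ 3 + 144 * X ^ 2 + 1248 * X + 1248))
          (8 * X ^ 6 + 56 * X ^ 5 + 244 * X ^ 4 + 752 * X ^ 3 + 1608 * X ^ 2 + 2088 * X + 1044)
          x := by
  rw [betaFn, integral_affine_mul_sub_mul_mul (continuous_cumul continuous_kernel),
    integral_mul_kernel_sq hx, integral_cumul_sq hx, integral_mul_cumul_sq hx,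
    integral_mul_cumul_sq_sq hx, cumul_kernel_sq hx]
  simp only [expPoly, eval_add, eval_sub, eval_neg, eval_mul, eval_pow, eval_C, eval_X,
    eval_ofNat, eval_one, eval_zero]
  ring

end StretchedExp

theorem asphericity_stretched_exponential_half :
    Tendsto (alphaFn (fun t => (1/2) * Real.exp (-Real.sqrt t))) atTop (nhds 21) ∧
    Tendsto (betaFn (fun t => (1/2) * Real.exp (-Real.sqrt t))) atTop (nhds 204) ∧
    Tendsto (fun τ : ℝ =>
        1 - 4 * (alphaFn (fun t => (1/2) * Real.exp (-Real.sqrt t)) τ /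
          betaFn (fun t => (1/2) * Real.exp (-Real.sqrt t)) τ))
      atTop (nhds (10 / 17)) := by
  have hα : Tendsto (alphaFn StretchedExp.kernel) atTop (nhds 21) :=
    tendsto_of_sq_eq_expPoly fun _ => StretchedExp.alphaFn_kernel_sq
  have hβ : Tendsto (betaFn StretchedExp.kernel) atTop (nhds 204) :=
    tendsto_of_sq_eq_expPoly fun _ => StretchedExp.betaFn_kernel_sq
  refine ⟨hα, hβ, ?_⟩
  have h := (tendsto_const_nhds (x := (1 : ℝ))).sub ((hα.div hβ (by norm_num)).const_mul 4)
  rwa [show (1 : ℝ) - 4 * (21 / 204) = 10 / 17 by norm_num] at h
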